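/- Let w be an element of Λ²(ℝⁿ) (an alternating 2-vector over ℝⁿ). If w ∧ w = 0, then w is decomposable, i.e., w = v₁ ∧ v₂ for some vectors v₁, v₂ ∈ ℝⁿ. -/

import Mathlib

/-!
Contraction `f ⌋ ·` with a linear form is an antiderivation and a 2-vector `w` commutes with
every vector, so `f ⌋ (w ∧ w) = 2 (f ⌋ w) ∧ w`, where `u = f ⌋ w` is a vector. Hence `w ∧ w = 0`
forces `u ∧ w = 0`, and contracting with a form `g` with `g u = 1` gives `w = u ∧ (g ⌋ w)`.
Such a `u ≠ 0` exists unless `w = 0`, since `∑ᵢ eᵢ ∧ (eᵢ* ⌋ w) = 2 w` for any basis `(eᵢ)`.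
-/

open CliffordAlgebra (contractLeft contractLeft_ι contractLeft_ι_mul)

namespace ExteriorAlgebra

section CommRing

variable {R M : Type*} [CommRing R] [AddCommGroup M] [Module R M]

@[elab_as_elim]
theorem exteriorPower_two_induction_on {P : ExteriorAlgebra R M → Prop}
    {w : ExteriorAlgebra R M} (hw : w ∈ ⋀[R]^2 M) (ι_mul_ι : ∀ a b, P (ι R a * ι R b))
    (add : ∀ x y, P x → P y → P (x + y)) : P w := by
  rw [exteriorPower, pow_two] at hw
  refine Submodule.mul_induction_on hw ?_ add
  rintro _ ⟨a, rfl⟩ _ ⟨b, rfl⟩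
  exact ι_mul_ι a b

theorem commute_ι_of_mem_exteriorPower_two {w : ExteriorAlgebra R M} (hw : w ∈ ⋀[R]^2 M)
    (a : M) : Commute (ι R a) w := by
  refine exteriorPower_two_induction_on hw (fun x y => ?_) fun x y hx hy => hx.add_right hy
  have anticomm : ∀ z, ι R a * ι R z = -(ι R z * ι R a) := fun z =>
    eq_neg_of_add_eq_zero_left (ι_add_mul_swap a z)
  rw [Commute, SemiconjBy, ← mul_assoc, anticomm, neg_mul, mul_assoc, anticomm, mul_neg,
    neg_neg, mul_assoc]

variable (f : Module.Dual R M)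

theorem contractLeft_ι_mul_ι (a b : M) :
    contractLeft f (ι R a * ι R b) = ι R (f a • b - f b • a) := by
  rw [contractLeft_ι_mul, contractLeft_ι, ← Algebra.commutes, ← Algebra.smul_def, map_sub,
    map_smul, map_smul]

theorem exists_contractLeft_eq_ι {w : ExteriorAlgebra R M} (hw : w ∈ ⋀[R]^2 M) :
    ∃ u : M, contractLeft f w = ι R u := by
  refine exteriorPower_two_induction_on hw
    (fun a b => ⟨f a • b - f b • a, contractLeft_ι_mul_ι f a b⟩) ?_
  rintro x y ⟨u, hu⟩ ⟨v, hv⟩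
  exact ⟨u + v, by rw [map_add, hu, hv, map_add]⟩

theorem contractLeft_mul_of_mem_exteriorPower_two {w : ExteriorAlgebra R M}
    (hw : w ∈ ⋀[R]^2 M) (x : ExteriorAlgebra R M) :
    contractLeft f (w * x) = contractLeft f w * x + w * contractLeft f x := by
  refine exteriorPower_two_induction_on hw (fun a b => ?_) fun y z hy hz => ?_
  · rw [contractLeft_ι_mul_ι, mul_assoc, contractLeft_ι_mul, contractLeft_ι_mul]
    simp only [map_sub, map_smul, mul_sub, sub_mul, smul_mul_assoc, mul_smul_comm, mul_assoc]
    abel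
  · rw [add_mul, map_add, hy, hz, map_add, add_mul, add_mul]
    abel

theorem contractLeft_mul_self {w : ExteriorAlgebra R M} (hw : w ∈ ⋀[R]^2 M) :
    contractLeft f (w * w) = (2 : R) • (contractLeft f w * w) := by
  obtain ⟨u, hu⟩ := exists_contractLeft_eq_ι f hw
  rw [contractLeft_mul_of_mem_exteriorPower_two f hw, hu,
    ← (commute_ι_of_mem_exteriorPower_two hw u).eq, two_smul]

theorem eq_ι_mul_contractLeft_of_ι_mul_eq_zero {u : M} {w : ExteriorAlgebra R M}
    (huw : ι R u * w = 0) (hfu : f u = 1) : w = ι R u * contractLeft f w := by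
  have h := contractLeft_ι_mul (Q := 0) f u w
  rw [huw, map_zero, hfu, one_smul] at h
  exact sub_eq_zero.mp h.symm

theorem sum_ι_mul_contractLeft_coord {κ : Type*} [Fintype κ] (b : Module.Basis κ R M)
    {w : ExteriorAlgebra R M} (hw : w ∈ ⋀[R]^2 M) :
    ∑ i, ι R (b i) * contractLeft (b.coord i) w = (2 : R) • w := by
  refine exteriorPower_two_induction_on hw (fun x y => ?_) fun v z hv hz => ?_
  · have expand : ∀ i, ι R (b i) * contractLeft (b.coord i) (ι R x * ι R y)
        = ι R (b.equivFun x i • b i) * ι R y - ι R (b.equivFun y i • b i) * ι R x := fun i => by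
      simp only [contractLeft_ι_mul_ι, Module.Basis.coord_apply, Module.Basis.equivFun_apply,
        map_sub, map_smul, mul_sub, smul_mul_assoc, mul_smul_comm]
    simp only [expand, Finset.sum_sub_distrib, ← Finset.sum_mul, ← map_sum, b.sum_equivFun]
    rw [two_smul, sub_eq_add_neg, ← eq_neg_of_add_eq_zero_left (ι_add_mul_swap x y)]
  · simp only [map_add, mul_add, Finset.sum_add_distrib, hv, hz, smul_add]

end CommRing

section Field

variable {K V : Type*} [Field K] [NeZero (2 : K)] [AddCommGroup V] [Module K V]

theorem eq_zero_of_forall_contractLeft_eq_zero [FiniteDimensional K V]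
    {w : ExteriorAlgebra K V} (hw : w ∈ ⋀[K]^2 V)
    (h : ∀ f : Module.Dual K V, contractLeft f w = 0) : w = 0 := by
  have h2w := sum_ι_mul_contractLeft_coord (Module.finBasis K V) hw
  simp only [h, mul_zero, Finset.sum_const_zero] at h2w
  exact (smul_eq_zero.mp h2w.symm).resolve_left two_ne_zero

theorem exists_eq_ι_mul_ι_of_mul_self_eq_zero [FiniteDimensional K V]
    {w : ExteriorAlgebra K V} (hw : w ∈ ⋀[K]^2 V) (hsq : w * w = 0) :
    ∃ v₁ v₂ : V, w = ι K v₁ * ι K v₂ := by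
  by_cases hzero : ∀ f : Module.Dual K V, contractLeft f w = 0
  · exact ⟨0, 0, by rw [eq_zero_of_forall_contractLeft_eq_zero hw hzero, map_zero, zero_mul]⟩
  obtain ⟨f, hf⟩ := not_forall.mp hzero
  obtain ⟨u, hu⟩ := exists_contractLeft_eq_ι f hw
  have hu0 : u ≠ 0 := by
    rintro rfl
    exact hf (by rw [hu, map_zero])
  have huw : ι K u * w = 0 := by
    have h := contractLeft_mul_self f hw
    rw [hsq, map_zero, hu, eq_comm, smul_eq_zero] at h
    exact h.resolve_left two_ne_zero
  obtain ⟨g, hgu⟩ := Module.Projective.exists_dual_eq_one K hu0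
  obtain ⟨u', hu'⟩ := exists_contractLeft_eq_ι g hw
  exact ⟨u, u', hu' ▸ eq_ι_mul_contractLeft_of_ι_mul_eq_zero g huw hgu⟩

end Field

end ExteriorAlgebra

/-- A 2-vector `w ∈ Λ²(ℝⁿ)` with `w ∧ w = 0` is decomposable, i.e.
`w = v₁ ∧ v₂` for some vectors `v₁, v₂ ∈ ℝⁿ`. -/
theorem two_form_sq_zero_decomposable (n : ℕ)
    (w : ExteriorAlgebra ℝ (Fin n → ℝ)) (hw : w ∈ ⋀[ℝ]^2 (Fin n → ℝ))
    (hsq : w * w = 0) :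
    ∃ v₁ v₂ : Fin n → ℝ, w = ExteriorAlgebra.ι ℝ v₁ * ExteriorAlgebra.ι ℝ v₂ :=
  ExteriorAlgebra.exists_eq_ι_mul_ι_of_mul_self_eq_zero hw hsq
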